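/- arXiv:2404.02725 — 10 statements merged into one kernel-verified Lean document; each statement's English description precedes it below -/
import Mathlib

section
/- For a two-qubit X-state with matrix entries 𝒳₁₁,𝒳₂₂,𝒳₃₃,𝒳₄₄ on the diagonal and 𝒳₁₄,𝒳₂₃ on the antidiagonal (and conjugates), the state ρ := S·ρ_α + (1-S)·(ϱ₁⊗ϱ₁), where ρ_α = |Ψ_α⟩⟨Ψ_α| with |Ψ_α⟩ = √(1-α)|00⟩+√α|11⟩, ϱ₁ = diag(1-α,α), and S = 1/(n-1), is an X-state; its concurrence is 2·max{0, S√(α(1-α)) − (1-S)α(1-α)} and is positive if and only if S/(1-S) > √(α(1-α)). -/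
open Matrix
open scoped Matrix Kronecker ComplexOrder

noncomputable section

/-- Index type for a two-qubit system. -/
abbrev Q2 := Fin 2 × Fin 2

/-- Pauli matrices. -/
def σx : Matrix (Fin 2) (Fin 2) ℂ := !![0, 1; 1, 0]
def σy : Matrix (Fin 2) (Fin 2) ℂ := !![0, -Complex.I; Complex.I, 0]
def σz : Matrix (Fin 2) (Fin 2) ℂ := !![1, 0; 0, -1]

/-- The vector `|Ψ_α⟩ = √(1-α)|00⟩ + √α|11⟩`. -/
def ketPsi (α : ℝ) : Q2 → ℂ := fun i =>
  if i = (0, 0) then (Real.sqrt (1 - α) : ℂ)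
  else if i = (1, 1) then (Real.sqrt α : ℂ) else 0

/-- The entangled two-qubit state `ρ_α = |Ψ_α⟩⟨Ψ_α|`. -/
def rhoAlpha (α : ℝ) : Matrix Q2 Q2 ℂ :=
  Matrix.of fun i j => ketPsi α i * star (ketPsi α j)

/-- The single-qubit state `diag(1-α, α)`. -/
def rho1 (α : ℝ) : Matrix (Fin 2) (Fin 2) ℂ := !![(1 - α : ℂ), 0; 0, (α : ℂ)]

/-- The single-qubit pure state `|0⟩⟨0|`. -/
def rho0 : Matrix (Fin 2) (Fin 2) ℂ := !![1, 0; 0, 0]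

/-- Partial trace over the first (Alice's) qubit. -/
def ptrA (ρ : Matrix Q2 Q2 ℂ) : Matrix (Fin 2) (Fin 2) ℂ :=
  Matrix.of fun i j => ∑ k : Fin 2, ρ (k, i) (k, j)

/-- Partial trace over the second (Bob's) qubit. -/
def ptrB (ρ : Matrix Q2 Q2 ℂ) : Matrix (Fin 2) (Fin 2) ℂ :=
  Matrix.of fun i j => ∑ k : Fin 2, ρ (i, k) (j, k)

/-- Pauli expectation value `Tr[ρ (A ⊗ B)]` (real part). -/
def pauliExp (ρ : Matrix Q2 Q2 ℂ) (A B : Matrix (Fin 2) (Fin 2) ℂ) : ℝ :=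
  (Matrix.trace (ρ * (A ⊗ₖ B))).re

def blochA (ρ : Matrix Q2 Q2 ℂ) : ℝ := pauliExp ρ σz 1
def blochB (ρ : Matrix Q2 Q2 ℂ) : ℝ := pauliExp ρ 1 σz
def corrX (ρ : Matrix Q2 Q2 ℂ) : ℝ := pauliExp ρ σx σx
def corrY (ρ : Matrix Q2 Q2 ℂ) : ℝ := pauliExp ρ σy σy
def corrZ (ρ : Matrix Q2 Q2 ℂ) : ℝ := pauliExp ρ σz σz

/-- The quantity `F = √((1+a)² − (b+t_z)²) + √((1-a)² − (b−t_z)²)` for a state `ρ`. -/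
def Fq (ρ : Matrix Q2 Q2 ℂ) : ℝ :=
  Real.sqrt ((1 + blochA ρ)^2 - (blochB ρ + corrZ ρ)^2)
    + Real.sqrt ((1 - blochA ρ)^2 - (blochB ρ - corrZ ρ)^2)

/-- The concurrence of a two-qubit X-state, via the formula
`C(𝒳) = 2·max{0, |𝒳₂₃| − √(𝒳₁₁𝒳₄₄), |𝒳₁₄| − √(𝒳₂₂𝒳₃₃)}`. -/
def concX (ρ : Matrix Q2 Q2 ℂ) : ℝ :=
  2 * max 0 (max
    (‖ρ (0, 1) (1, 0)‖ -
      Real.sqrt ((ρ (0, 0) (0, 0)).re * (ρ (1, 1) (1, 1)).re))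
    (‖ρ (0, 0) (1, 1)‖ -
      Real.sqrt ((ρ (0, 1) (0, 1)).re * (ρ (1, 0) (1, 0)).re)))

/-- `ρ` is an X-state: in the computational basis its only nonzero entries lie on
the main diagonal or the antidiagonal. -/
def IsXState (ρ : Matrix Q2 Q2 ℂ) : Prop :=
  ∀ i j : Q2, ¬ ((i.1 = j.1 ∧ i.2 = j.2) ∨ (i.1 ≠ j.1 ∧ i.2 ≠ j.2)) → ρ i j = 0

/-- The state `S·ρ_α + (1-S)·(ϱ₁⊗ϱ₁)` with `S = 1/(n-1)` is an X-state; its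
concurrence is `2·max{0, S√(α(1-α)) − (1-S)α(1-α)}`, positive iff
`S/(1-S) > √(α(1-α))`. -/
theorem stmt4 (n : ℝ) (hn : 2 < n) (α : ℝ) (hα : α ∈ Set.Ioc 0 (1/2 : ℝ))
    (S : ℝ) (hS : S = 1 / (n - 1))
    (ρ : Matrix Q2 Q2 ℂ)
    (hρ : ρ = ((S : ℝ) : ℂ) • rhoAlpha α + (((1 - S : ℝ)) : ℂ) • (rho1 α ⊗ₖ rho1 α)) :
    IsXState ρ ∧
    concX ρ = 2 * max 0 (S * Real.sqrt (α * (1 - α)) - (1 - S) * α * (1 - α)) ∧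
    (0 < concX ρ ↔ Real.sqrt (α * (1 - α)) < S / (1 - S)) := by
  obtain ⟨hα0, hα2⟩ := hα
  have h1α : 0 < 1 - α := by linarith
  have hS0 : 0 < S := by rw [hS]; exact div_pos one_pos (by linarith)
  have hS1 : S < 1 := by
    rw [hS]; rw [div_lt_one (by linarith)]; linarith
  have h1S : 0 < 1 - S := by linarith
  have hXS : IsXState ρ := by
    subst hρ
    intro i j h
    obtain ⟨i1, i2⟩ := i; obtain ⟨j1, j2⟩ := j
    fin_cases i1 <;> fin_cases i2 <;> fin_cases j1 <;> fin_cases j2 <;>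
      simp_all [rhoAlpha, ketPsi, rho1, Matrix.kroneckerMap_apply, Matrix.add_apply,
        Matrix.smul_apply]
  -- entries
  have e00 : ρ ((0,0):Q2) ((0,0):Q2) = ((S * (1-α) + (1-S)*((1-α)*(1-α)) : ℝ) : ℂ) := by
    subst hρ
    simp [rhoAlpha, ketPsi, rho1, Matrix.kroneckerMap_apply, Matrix.add_apply,
      Matrix.smul_apply]
    left
    rw [← Complex.ofReal_mul, Real.mul_self_sqrt (le_of_lt h1α)]
    push_cast; ring
  have e11 : ρ ((1,1):Q2) ((1,1):Q2) = ((S * α + (1-S)*(α*α) : ℝ) : ℂ) := by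
    subst hρ
    simp [rhoAlpha, ketPsi, rho1, Matrix.kroneckerMap_apply, Matrix.add_apply,
      Matrix.smul_apply]
    left
    rw [← Complex.ofReal_mul, Real.mul_self_sqrt (le_of_lt hα0)]
    all_goals (push_cast; ring)
  have e01 : ρ ((0,1):Q2) ((0,1):Q2) = (((1-S)*((1-α)*α) : ℝ) : ℂ) := by
    subst hρ
    simp [rhoAlpha, ketPsi, rho1, Matrix.kroneckerMap_apply, Matrix.add_apply,
      Matrix.smul_apply]
  have e10 : ρ ((1,0):Q2) ((1,0):Q2) = (((1-S)*(α*(1-α)) : ℝ) : ℂ) := by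
    subst hρ
    simp [rhoAlpha, ketPsi, rho1, Matrix.kroneckerMap_apply, Matrix.add_apply,
      Matrix.smul_apply]
  have eE : ρ ((0,0):Q2) ((1,1):Q2) = ((S * Real.sqrt (α*(1-α)) : ℝ) : ℂ) := by
    subst hρ
    simp [rhoAlpha, ketPsi, rho1, Matrix.kroneckerMap_apply, Matrix.add_apply,
      Matrix.smul_apply]
    left
    rw [Real.sqrt_mul (le_of_lt hα0)]
    push_cast; ring
  have eZ : ρ ((0,1):Q2) ((1,0):Q2) = 0 := by
    subst hρ
    simp [rhoAlpha, ketPsi, rho1, Matrix.kroneckerMap_apply, Matrix.add_apply,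
      Matrix.smul_apply]
  have hsq : Real.sqrt (((1-S)*((1-α)*α)) * ((1-S)*(α*(1-α)))) = (1-S)*(α*(1-α)) := by
    rw [show ((1-S)*((1-α)*α)) * ((1-S)*(α*(1-α))) = ((1-S)*(α*(1-α)))^2 by ring]
    exact Real.sqrt_sq (by positivity)
  have hconc : concX ρ = 2 * max 0 (S * Real.sqrt (α * (1 - α)) - (1 - S) * α * (1 - α)) := by
    rw [concX, e00, e11, e01, e10, eE, eZ]
    simp only [Complex.ofReal_re, map_zero, norm_zero, Complex.norm_real, Real.norm_eq_abs, hsq]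
    rw [abs_of_nonneg (mul_nonneg hS0.le (Real.sqrt_nonneg _)), zero_sub]
    rw [max_comm (-Real.sqrt _)]
    rw [← max_assoc]
    congr 1
    rw [max_eq_left]
    · ring_nf
    · have : 0 ≤ Real.sqrt ((S * (1-α) + (1-S)*((1-α)*(1-α))) * (S * α + (1-S)*(α*α))) :=
        Real.sqrt_nonneg _
      have h0 : 0 ≤ max 0 (S * Real.sqrt (α * (1 - α)) - (1 - S) * (α * (1 - α))) :=
        le_max_left _ _
      linarith
  refine ⟨hXS, hconc, ?_⟩
  rw [hconc]
  have hp : 0 < α * (1 - α) := by positivity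
  have hsp : 0 < Real.sqrt (α * (1 - α)) := Real.sqrt_pos.mpr hp
  have hss : Real.sqrt (α * (1-α)) * Real.sqrt (α * (1-α)) = α * (1-α) :=
    Real.mul_self_sqrt (le_of_lt hp)
  rw [lt_div_iff₀ h1S]
  constructor
  · intro h
    have h2 : 0 < S * Real.sqrt (α * (1 - α)) - (1 - S) * α * (1 - α) := by
      by_contra hc
      push_neg at hc
      rw [max_eq_left hc] at h
      simp at h
    nlinarith
  · intro h
    have h2 : 0 < S * Real.sqrt (α * (1 - α)) - (1 - S) * α * (1 - α) := by
      nlinarith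
    rw [max_eq_right (le_of_lt h2)]
    linarith


end
end

section
/- The bipartite reduced R(n/2)PE state ϱ = (1/(n-1))ρ_α + ((n-2)/(n-1))ϱ₁⊗ϱ₁ is entangled (has positive concurrence) if and only if 1 − 2α > √(n(n-4))/(n-2). -/
open Matrix
open scoped Matrix Kronecker ComplexOrder

noncomputable section

/-- The bipartite reduced R(n/2)PE state. -/
def rn2pe (α : ℝ) (n : ℕ) : Matrix Q2 Q2 ℂ :=
  (((1 / ((n : ℝ) - 1) : ℝ)) : ℂ) • rhoAlpha α
    + (((((n : ℝ) - 2) / ((n : ℝ) - 1) : ℝ)) : ℂ) • (rho1 α ⊗ₖ rho1 α)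

lemma e_offmid (α : ℝ) (n : ℕ) : rn2pe α n (0,1) (1,0) = 0 := by
  simp [rn2pe, rhoAlpha, rho1, ketPsi, Matrix.kroneckerMap_apply]

lemma e_00 (α : ℝ) (n : ℕ) : rn2pe α n (0,0) (0,0) =
    ((1/((n:ℝ)-1) * (Real.sqrt (1-α) * Real.sqrt (1-α))
      + ((n:ℝ)-2)/((n:ℝ)-1) * ((1-α)*(1-α)) : ℝ) : ℂ) := by
  simp [rn2pe, rhoAlpha, rho1, ketPsi, Matrix.kroneckerMap_apply]

lemma e_11 (α : ℝ) (n : ℕ) : rn2pe α n (1,1) (1,1) =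
    ((1/((n:ℝ)-1) * (Real.sqrt α * Real.sqrt α)
      + ((n:ℝ)-2)/((n:ℝ)-1) * (α*α) : ℝ) : ℂ) := by
  simp [rn2pe, rhoAlpha, rho1, ketPsi, Matrix.kroneckerMap_apply]

lemma e_corner (α : ℝ) (n : ℕ) : rn2pe α n (0,0) (1,1) =
    ((1/((n:ℝ)-1) * (Real.sqrt (1-α) * Real.sqrt α) : ℝ) : ℂ) := by
  simp [rn2pe, rhoAlpha, rho1, ketPsi, Matrix.kroneckerMap_apply]

lemma e_01 (α : ℝ) (n : ℕ) : rn2pe α n (0,1) (0,1) =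
    ((((n:ℝ)-2)/((n:ℝ)-1) * ((1-α)*α) : ℝ) : ℂ) := by
  simp [rn2pe, rhoAlpha, rho1, ketPsi, Matrix.kroneckerMap_apply]

lemma e_10 (α : ℝ) (n : ℕ) : rn2pe α n (1,0) (1,0) =
    ((((n:ℝ)-2)/((n:ℝ)-1) * (α*(1-α)) : ℝ) : ℂ) := by
  simp [rn2pe, rhoAlpha, rho1, ketPsi, Matrix.kroneckerMap_apply]

lemma concX_val (α : ℝ) (n : ℕ) : concX (rn2pe α n) =
    2 * max 0 (max
      (0 - Real.sqrt ((1/((n:ℝ)-1) * (Real.sqrt (1-α) * Real.sqrt (1-α))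
            + ((n:ℝ)-2)/((n:ℝ)-1) * ((1-α)*(1-α)))
          * (1/((n:ℝ)-1) * (Real.sqrt α * Real.sqrt α)
            + ((n:ℝ)-2)/((n:ℝ)-1) * (α*α))))
      (|1/((n:ℝ)-1) * (Real.sqrt (1-α) * Real.sqrt α)|
        - Real.sqrt ((((n:ℝ)-2)/((n:ℝ)-1) * ((1-α)*α))
            * (((n:ℝ)-2)/((n:ℝ)-1) * (α*(1-α)))))) := by
  rw [concX, e_offmid, e_00, e_11, e_corner, e_01, e_10]
  simp only [norm_zero, Complex.norm_real, Real.norm_eq_abs, Complex.ofReal_re]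

lemma max_pos_iff5 (a b : ℝ) (ha : a ≤ 0) : 0 < 2 * max 0 (max a b) ↔ 0 < b := by
  constructor
  · intro h
    rcases lt_max_iff.mp (by linarith : (0:ℝ) < max 0 (max a b)) with h' | h'
    · exact absurd h' (lt_irrefl 0)
    · rcases lt_max_iff.mp h' with h'' | h''
      · linarith
      · exact h''
  · intro h
    have : (0:ℝ) < max 0 (max a b) := lt_max_iff.mpr (Or.inr (lt_max_iff.mpr (Or.inr h)))
    linarith

set_option maxHeartbeats 2000000 in
lemma helper5 (nr α t s : ℝ) (hn4 : 4 ≤ nr) (hα0 : 0 < α) (hαh : α ≤ 1/2)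
    (hs0 : 0 < s) (ht0 : 0 < t) (hs2 : s*s = α) (ht2 : t*t = 1-α) :
    (0 < 2 * max 0 (max
      (0 - Real.sqrt ((1/(nr-1) * (t*t) + (nr-2)/(nr-1) * ((1-α)*(1-α)))
          * (1/(nr-1) * (s*s) + (nr-2)/(nr-1) * (α*α))))
      (|1/(nr-1) * (t*s)|
        - Real.sqrt (((nr-2)/(nr-1) * ((1-α)*α)) * ((nr-2)/(nr-1) * (α*(1-α))))))
      ↔ Real.sqrt (nr * (nr-4)) / (nr-2) < 1 - 2*α) := by
  have hn1 : (0:ℝ) < nr - 1 := by linarith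
  have hn2 : (0:ℝ) < nr - 2 := by linarith
  have h1a : (0:ℝ) < 1 - α := by linarith
  have hu0 : 0 < t * s := mul_pos ht0 hs0
  have hu2 : (t*s) * (t*s) = α * (1 - α) := by nlinarith
  have habs : |1/(nr-1) * (t*s)| = 1/(nr-1) * (t*s) := abs_of_nonneg (by positivity)
  have hsqv : Real.sqrt (((nr-2)/(nr-1) * ((1-α)*α)) * ((nr-2)/(nr-1) * (α*(1-α))))
      = (nr-2)/(nr-1) * (α*(1-α)) := by
    have he : ((nr-2)/(nr-1) * ((1-α)*α)) * ((nr-2)/(nr-1) * (α*(1-α)))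
        = ((nr-2)/(nr-1) * (α*(1-α))) * ((nr-2)/(nr-1) * (α*(1-α))) := by ring
    rw [he, Real.sqrt_mul_self (by positivity)]
  rw [habs, hsqv, max_pos_iff5 _ _ (by
    have := Real.sqrt_nonneg ((1/(nr-1) * (t*t) + (nr-2)/(nr-1) * ((1-α)*(1-α)))
        * (1/(nr-1) * (s*s) + (nr-2)/(nr-1) * (α*α)))
    linarith)]
  have hmul : (nr-1) * (1/(nr-1) * (t*s) - (nr-2)/(nr-1) * (α*(1-α)))
      = t*s - (nr-2) * ((t*s)*(t*s)) := by
    rw [hu2]; field_simp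
  have key : (0 < 1/(nr-1) * (t*s) - (nr-2)/(nr-1) * (α*(1-α))) ↔ (nr-2) * (t*s) < 1 := by
    constructor
    · intro h2
      have h3 : 0 < t*s - (nr-2) * ((t*s)*(t*s)) := by nlinarith
      have h4 : (nr-2) * (t*s) * (t*s) < 1 * (t*s) := by nlinarith
      exact lt_of_mul_lt_mul_right (by linarith) (le_of_lt hu0)
    · intro h
      have h3 : (nr-2) * ((t*s)*(t*s)) < t*s := by nlinarith
      nlinarith
  rw [key]
  constructor
  · intro h
    have hx : ((nr-2)*(t*s))^2 < 1 := by nlinarith [mul_pos hn2 hu0]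
    have hx2 : (nr-2)^2 * (α*(1-α)) < 1 := by
      rw [← hu2]; nlinarith [hx]
    have hα12 : α < 1/2 := by nlinarith
    rw [div_lt_iff₀ hn2]
    rw [Real.sqrt_lt' (show (0:ℝ) < (1 - 2*α) * (nr-2) by nlinarith)]
    nlinarith [hx2]
  · intro h
    rw [div_lt_iff₀ hn2] at h
    have hs0' : 0 ≤ Real.sqrt (nr * (nr-4)) := Real.sqrt_nonneg _
    have hpos : 0 < (1 - 2*α) * (nr - 2) := lt_of_le_of_lt hs0' h
    have hsqe := Real.sq_sqrt (by nlinarith : (0:ℝ) ≤ nr * (nr-4))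
    have hsq2 : nr * (nr-4) < ((1-2*α) * (nr-2))^2 := by nlinarith [h, hs0', hsqe]
    have hxx : (nr-2)^2 * ((t*s)*(t*s)) = (nr-2)^2 * (α*(1-α)) := by rw [hu2]
    nlinarith [hxx, hsq2, mul_pos hn2 hu0, sq_nonneg ((nr-2)*(t*s) - 1),
      sq_nonneg ((nr-2)*(t*s) + 1)]

/-- The bipartite reduced R(n/2)PE state is entangled (positive concurrence)
iff `1 − 2α > √(n(n-4))/(n-2)`. -/
theorem stmt5 (n : ℕ) (hn : 4 ≤ n) (hne : Even n) (α : ℝ) (hα : α ∈ Set.Ioc 0 (1/2 : ℝ)) :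
    0 < concX (rn2pe α n) ↔
      Real.sqrt ((n : ℝ) * ((n : ℝ) - 4)) / ((n : ℝ) - 2) < 1 - 2 * α := by
  obtain ⟨hα0, hαh⟩ := hα
  have hn4 : (4:ℝ) ≤ (n:ℝ) := by exact_mod_cast hn
  rw [concX_val]
  exact helper5 (n:ℝ) α (Real.sqrt (1-α)) (Real.sqrt α) hn4 hα0 hαh
    (Real.sqrt_pos.mpr hα0) (Real.sqrt_pos.mpr (by linarith))
    (Real.mul_self_sqrt hα0.le) (Real.mul_self_sqrt (by linarith))

end
end

section
/- The bipartite reduced RPE state ϱ = (2/(n(n-1)))ρ_α + (2(n-2)/(n(n-1)))(ϱ₁⊗ρ₀ + ρ₀⊗ϱ₁) + ((n²-5n+6)/(n(n-1)))ρ₀⊗ρ₀ is entangled if and only if α < 1/(n²-4n+5). -/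
open Matrix
open scoped Matrix Kronecker ComplexOrder

noncomputable section

/-- The bipartite reduced RPE state. -/
def rpe (α : ℝ) (n : ℕ) : Matrix Q2 Q2 ℂ :=
  (((2 / ((n : ℝ) * ((n : ℝ) - 1)) : ℝ)) : ℂ) • rhoAlpha α
    + (((2 * ((n : ℝ) - 2) / ((n : ℝ) * ((n : ℝ) - 1)) : ℝ)) : ℂ) •
        (rho1 α ⊗ₖ rho0 + rho0 ⊗ₖ rho1 α)
    + (((((n : ℝ)^2 - 5 * n + 6) / ((n : ℝ) * ((n : ℝ) - 1)) : ℝ)) : ℂ) • (rho0 ⊗ₖ rho0)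

/-- The bipartite reduced RPE state is entangled iff `α < 1/(n²-4n+5)`. -/
theorem stmt6 (n : ℕ) (hn : 3 ≤ n) (α : ℝ) (hα : α ∈ Set.Ioc 0 (1/2 : ℝ)) :
    0 < concX (rpe α n) ↔ α < 1 / ((n : ℝ)^2 - 4 * n + 5) := by
  obtain ⟨hα0, hα1⟩ := hα
  have hN3 : (3 : ℝ) ≤ (n : ℝ) := by exact_mod_cast hn
  have hD : 0 < (n : ℝ) * ((n : ℝ) - 1) := by nlinarith
  have h1α : (0:ℝ) ≤ 1 - α := by linarith
  set s := Real.sqrt (1 - α) * Real.sqrt α with hs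
  have hs0 : 0 ≤ s := mul_nonneg (Real.sqrt_nonneg _) (Real.sqrt_nonneg _)
  have hs2 : s * s = (1 - α) * α := by
    rw [hs]
    rw [show Real.sqrt (1-α) * Real.sqrt α * (Real.sqrt (1-α) * Real.sqrt α)
        = (Real.sqrt (1-α) * Real.sqrt (1-α)) * (Real.sqrt α * Real.sqrt α) by ring,
      Real.mul_self_sqrt h1α, Real.mul_self_sqrt hα0.le]
  have hpos : 0 < (n : ℝ) ^ 2 - 4 * n + 5 := by nlinarith
  -- the arithmetic core, proved before matrix facts clutter the context
  have hcore : 0 < 2 * s - 2 * ((n : ℝ) - 2) * α ↔ α * ((n : ℝ) ^ 2 - 4 * n + 5) < 1 := by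
    constructor
    · intro hnum
      have ht : ((n : ℝ) - 2) * α < s := by linarith
      have htnn : 0 ≤ ((n : ℝ) - 2) * α := mul_nonneg (by linarith) hα0.le
      have hsq : (((n : ℝ) - 2) * α) * (((n : ℝ) - 2) * α) < s * s :=
        mul_self_lt_mul_self htnn ht
      rw [hs2] at hsq
      have h5 : α * (α * ((n : ℝ) ^ 2 - 4 * n + 5)) < α * 1 := by nlinarith [hsq]
      have := lt_of_mul_lt_mul_left h5 hα0.le
      linarith
    · intro h
      have h' : (0:ℝ) < 1 - α * ((n : ℝ) ^ 2 - 4 * n + 5) := by linarith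
      have hp := mul_pos hα0 h'
      have hsq : (((n : ℝ) - 2) * α) * (((n : ℝ) - 2) * α) < s * s := by
        rw [hs2]; nlinarith [hp]
      have ht : ((n : ℝ) - 2) * α < s := by
        by_contra hle
        push_neg at hle
        have := mul_self_le_mul_self hs0 hle
        linarith
      linarith
  -- entries
  have e23 : rpe α n ((0:Fin 2), (1:Fin 2)) ((1:Fin 2), (0:Fin 2)) = 0 := by
    simp [rpe, rhoAlpha, ketPsi, rho1, rho0, Matrix.kroneckerMap_apply, Matrix.add_apply,
      Matrix.smul_apply]
  have e14 : rpe α n ((0:Fin 2), (0:Fin 2)) ((1:Fin 2), (1:Fin 2)) =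
      ((2 / ((n : ℝ) * ((n : ℝ) - 1)) * s : ℝ) : ℂ) := by
    simp [rpe, rhoAlpha, ketPsi, rho1, rho0, Matrix.kroneckerMap_apply, Matrix.add_apply,
      Matrix.smul_apply, hs]
  have e22 : rpe α n ((0:Fin 2), (1:Fin 2)) ((0:Fin 2), (1:Fin 2)) =
      ((2 * ((n : ℝ) - 2) / ((n : ℝ) * ((n : ℝ) - 1)) * α : ℝ) : ℂ) := by
    simp [rpe, rhoAlpha, ketPsi, rho1, rho0, Matrix.kroneckerMap_apply, Matrix.add_apply,
      Matrix.smul_apply]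
  have e33 : rpe α n ((1:Fin 2), (0:Fin 2)) ((1:Fin 2), (0:Fin 2)) =
      ((2 * ((n : ℝ) - 2) / ((n : ℝ) * ((n : ℝ) - 1)) * α : ℝ) : ℂ) := by
    simp [rpe, rhoAlpha, ketPsi, rho1, rho0, Matrix.kroneckerMap_apply, Matrix.add_apply,
      Matrix.smul_apply]
  have hc2nn : 0 ≤ 2 * ((n : ℝ) - 2) / ((n : ℝ) * ((n : ℝ) - 1)) * α :=
    mul_nonneg (div_nonneg (by nlinarith) hD.le) hα0.le
  have habs14 : ‖rpe α n ((0:Fin 2), (0:Fin 2)) ((1:Fin 2), (1:Fin 2))‖ =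
      2 / ((n : ℝ) * ((n : ℝ) - 1)) * s := by
    rw [e14, Complex.norm_real, Real.norm_eq_abs, abs_of_nonneg]
    exact mul_nonneg (div_nonneg (by norm_num) hD.le) hs0
  have habs23 : ‖rpe α n ((0:Fin 2), (1:Fin 2)) ((1:Fin 2), (0:Fin 2))‖ = 0 := by
    rw [e23]; simp
  have hre22 : (rpe α n ((0:Fin 2), (1:Fin 2)) ((0:Fin 2), (1:Fin 2))).re =
      2 * ((n : ℝ) - 2) / ((n : ℝ) * ((n : ℝ) - 1)) * α := by
    rw [e22, Complex.ofReal_re]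
  have hre33 : (rpe α n ((1:Fin 2), (0:Fin 2)) ((1:Fin 2), (0:Fin 2))).re =
      2 * ((n : ℝ) - 2) / ((n : ℝ) * ((n : ℝ) - 1)) * α := by
    rw [e33, Complex.ofReal_re]
  -- rewrite concurrence
  unfold concX
  rw [habs23, habs14, hre22, hre33, Real.sqrt_mul_self hc2nn]
  set A : ℝ := 0 - Real.sqrt ((rpe α n (0, 0) (0, 0)).re * (rpe α n (1, 1) (1, 1)).re) with hA
  set B : ℝ := 2 / ((n : ℝ) * ((n : ℝ) - 1)) * s
      - 2 * ((n : ℝ) - 2) / ((n : ℝ) * ((n : ℝ) - 1)) * α with hB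
  have hAle : A ≤ 0 := by
    rw [hA]
    have := Real.sqrt_nonneg ((rpe α n (0, 0) (0, 0)).re * (rpe α n (1, 1) (1, 1)).re)
    linarith
  have hkey : 0 < 2 * max 0 (max A B) ↔ 0 < B := by
    constructor
    · intro h
      by_contra hBle
      push_neg at hBle
      have hmax : max 0 (max A B) = 0 := max_eq_left (max_le hAle hBle)
      rw [hmax] at h
      simp at h
    · intro h
      have : 0 < max 0 (max A B) := lt_max_of_lt_right (lt_max_of_lt_right h)
      linarith
  rw [hkey, hB]
  have hform : 2 / ((n : ℝ) * ((n : ℝ) - 1)) * s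
      - 2 * ((n : ℝ) - 2) / ((n : ℝ) * ((n : ℝ) - 1)) * α
      = (2 * s - 2 * ((n : ℝ) - 2) * α) / ((n : ℝ) * ((n : ℝ) - 1)) := by ring
  rw [hform]
  rw [lt_div_iff₀ hpos, div_pos_iff]
  constructor
  · rintro (⟨hnum, -⟩ | ⟨-, hden⟩)
    · exact hcore.mp hnum
    · exact absurd hD (not_lt.2 hden.le)
  · intro h
    exact Or.inl ⟨hcore.mpr h, hD⟩

end
end

section
/- The bipartite reduced SRPE state ϱ = (1/(n-1))ρ_α + ((n-2)/(n-1))ϱ₁⊗ρ₀ has positive concurrence for every α ∈ (0, 1/2] and every integer n ≥ 2; i.e., it is entangled for all such parameters. -/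
open Matrix
open scoped Matrix Kronecker ComplexOrder

noncomputable section

/-- The bipartite reduced SRPE state. -/
def srpe (α : ℝ) (n : ℕ) : Matrix Q2 Q2 ℂ :=
  (((1 / ((n : ℝ) - 1) : ℝ)) : ℂ) • rhoAlpha α
    + (((((n : ℝ) - 2) / ((n : ℝ) - 1) : ℝ)) : ℂ) • (rho1 α ⊗ₖ rho0)

/-- The bipartite reduced SRPE state has positive concurrence for every
`α ∈ (0, 1/2]` and every integer `n ≥ 2`. -/
theorem stmt7 (α : ℝ) (hα : α ∈ Set.Ioc 0 (1/2 : ℝ)) (n : ℕ) (hn : 2 ≤ n) :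
    0 < concX (srpe α n) := by
  obtain ⟨hα0, hα2⟩ := hα
  have hα1 : α < 1 := by linarith
  have hn1 : (1:ℝ) ≤ (n:ℝ) - 1 := by
    have h2n : (2:ℝ) ≤ (n:ℝ) := by exact_mod_cast hn
    linarith
  have hc : 0 < 1 / ((n:ℝ) - 1) := by positivity
  have h1 : srpe α n (0,1) (0,1) = 0 := by
    simp [srpe, rhoAlpha, ketPsi, rho1, rho0, Matrix.kroneckerMap_apply,
      Matrix.add_apply, Matrix.smul_apply, Prod.ext_iff]
  have h2 : srpe α n (0,0) (1,1)
      = (((1/((n:ℝ)-1)) * (Real.sqrt (1-α) * Real.sqrt α) : ℝ) : ℂ) := by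
    simp [srpe, rhoAlpha, ketPsi, rho1, rho0, Matrix.kroneckerMap_apply,
      Matrix.add_apply, Matrix.smul_apply, Prod.ext_iff]
    try push_cast
    try ring
  have key : 0 < ‖srpe α n (0,0) (1,1)‖ -
      Real.sqrt ((srpe α n (0,1) (0,1)).re * (srpe α n (1,0) (1,0)).re) := by
    rw [h1, h2]
    simp only [Complex.zero_re, zero_mul, Real.sqrt_zero, sub_zero,
      Complex.norm_real, Real.norm_eq_abs]
    have hs1 : 0 < Real.sqrt (1-α) := Real.sqrt_pos.mpr (by linarith)
    have hs2 : 0 < Real.sqrt α := Real.sqrt_pos.mpr hα0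
    have : 0 < (1/((n:ℝ)-1)) * (Real.sqrt (1-α) * Real.sqrt α) := by positivity
    rw [abs_of_pos this]; exact this
  have hmax : ‖srpe α n (0,0) (1,1)‖ -
      Real.sqrt ((srpe α n (0,1) (0,1)).re * (srpe α n (1,0) (1,0)).re)
      ≤ max 0 (max
        (‖srpe α n (0, 1) (1, 0)‖ -
          Real.sqrt ((srpe α n (0, 0) (0, 0)).re * (srpe α n (1, 1) (1, 1)).re))
        (‖srpe α n (0, 0) (1, 1)‖ -
          Real.sqrt ((srpe α n (0, 1) (0, 1)).re * (srpe α n (1, 0) (1, 0)).re))) :=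
    le_trans (le_max_right _ _) (le_max_right _ _)
  have : 0 < max 0 (max
        (‖srpe α n (0, 1) (1, 0)‖ -
          Real.sqrt ((srpe α n (0, 0) (0, 0)).re * (srpe α n (1, 1) (1, 1)).re))
        (‖srpe α n (0, 0) (1, 1)‖ -
          Real.sqrt ((srpe α n (0, 1) (0, 1)).re * (srpe α n (1, 0) (1, 0)).re))) :=
    lt_of_lt_of_le key hmax
  unfold concX
  linarith

end
end

section
/- For the bipartite reduced SRPE state, Alice can steer Bob with the two-measurement strategy 𝓜₂ (criterion F/t⊥ < 2) if and only if α < 1/(n-1). -/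
open Matrix
open scoped Matrix Kronecker ComplexOrder

noncomputable section

section Aux
variable (α : ℝ) (n : ℕ)

private lemma srpe_blochA (hc : ((n:ℝ)-1) ≠ 0) (h0 : 0 ≤ α) (h1 : α ≤ 1) :
    blochA (srpe α n) = 1 - 2*α := by
  simp only [blochA, pauliExp, srpe, rhoAlpha, rho1, rho0, ketPsi, σz, Matrix.trace, Matrix.mul_apply,
    Fintype.sum_prod_type, Fin.sum_univ_two, Matrix.kroneckerMap_apply, Matrix.one_apply,
    Matrix.diag, Matrix.add_apply, Matrix.smul_apply, Matrix.of_apply, Matrix.cons_val', Matrix.cons_val_zero,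
    Matrix.cons_val_one, Matrix.head_cons, Matrix.head_fin_const, Matrix.empty_val', Matrix.cons_val_fin_one]
  simp [Complex.add_re, Complex.mul_re, Complex.ofReal_re, Complex.ofReal_im,
    -Complex.ofReal_div, -Complex.ofReal_sub, -Complex.ofReal_natCast, -Complex.ofReal_one, -Complex.ofReal_ofNat,
    Real.mul_self_sqrt h0, Real.mul_self_sqrt (by linarith : (0:ℝ) ≤ 1 - α)]
  field_simp
  ring

private lemma srpe_blochB (hc : ((n:ℝ)-1) ≠ 0) (h0 : 0 ≤ α) (h1 : α ≤ 1) :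
    blochB (srpe α n) = 1 - 2*α/((n:ℝ)-1) := by
  simp only [blochB, pauliExp, srpe, rhoAlpha, rho1, rho0, ketPsi, σz, Matrix.trace, Matrix.mul_apply,
    Fintype.sum_prod_type, Fin.sum_univ_two, Matrix.kroneckerMap_apply, Matrix.one_apply,
    Matrix.diag, Matrix.add_apply, Matrix.smul_apply, Matrix.of_apply, Matrix.cons_val', Matrix.cons_val_zero,
    Matrix.cons_val_one, Matrix.head_cons, Matrix.head_fin_const, Matrix.empty_val', Matrix.cons_val_fin_one]
  simp [Complex.add_re, Complex.mul_re, Complex.ofReal_re, Complex.ofReal_im,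
    -Complex.ofReal_div, -Complex.ofReal_sub, -Complex.ofReal_natCast, -Complex.ofReal_one, -Complex.ofReal_ofNat,
    Real.mul_self_sqrt h0, Real.mul_self_sqrt (by linarith : (0:ℝ) ≤ 1 - α)]
  field_simp
  ring

private lemma srpe_corrZ (hc : ((n:ℝ)-1) ≠ 0) (h0 : 0 ≤ α) (h1 : α ≤ 1) :
    corrZ (srpe α n) = 1 - 2*α*((n:ℝ)-2)/((n:ℝ)-1) := by
  simp only [corrZ, pauliExp, srpe, rhoAlpha, rho1, rho0, ketPsi, σz, Matrix.trace, Matrix.mul_apply,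
    Fintype.sum_prod_type, Fin.sum_univ_two, Matrix.kroneckerMap_apply, Matrix.one_apply,
    Matrix.diag, Matrix.add_apply, Matrix.smul_apply, Matrix.of_apply, Matrix.cons_val', Matrix.cons_val_zero,
    Matrix.cons_val_one, Matrix.head_cons, Matrix.head_fin_const, Matrix.empty_val', Matrix.cons_val_fin_one]
  simp [Complex.add_re, Complex.mul_re, Complex.ofReal_re, Complex.ofReal_im,
    -Complex.ofReal_div, -Complex.ofReal_sub, -Complex.ofReal_natCast, -Complex.ofReal_one, -Complex.ofReal_ofNat,
    Real.mul_self_sqrt h0, Real.mul_self_sqrt (by linarith : (0:ℝ) ≤ 1 - α)]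
  field_simp
  ring

private lemma srpe_corrX (hc : ((n:ℝ)-1) ≠ 0) (h0 : 0 ≤ α) (h1 : α ≤ 1) :
    corrX (srpe α n) = 2 * Real.sqrt α * Real.sqrt (1-α) / ((n:ℝ)-1) := by
  simp only [corrX, pauliExp, srpe, rhoAlpha, rho1, rho0, ketPsi, σx, Matrix.trace, Matrix.mul_apply,
    Fintype.sum_prod_type, Fin.sum_univ_two, Matrix.kroneckerMap_apply, Matrix.one_apply,
    Matrix.diag, Matrix.add_apply, Matrix.smul_apply, Matrix.of_apply, Matrix.cons_val', Matrix.cons_val_zero,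
    Matrix.cons_val_one, Matrix.head_cons, Matrix.head_fin_const, Matrix.empty_val', Matrix.cons_val_fin_one]
  simp [Complex.add_re, Complex.mul_re, Complex.ofReal_re, Complex.ofReal_im,
    -Complex.ofReal_div, -Complex.ofReal_sub, -Complex.ofReal_natCast, -Complex.ofReal_one, -Complex.ofReal_ofNat,
    Real.mul_self_sqrt h0, Real.mul_self_sqrt (by linarith : (0:ℝ) ≤ 1 - α)]
  field_simp
  ring

end Aux

/-- For the bipartite reduced SRPE state, Alice can steer Bob with the
two-measurement strategy `𝓜₂` (criterion `F/t⊥ < 2`) iff `α < 1/(n-1)`. -/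
theorem stmt8 (n : ℕ) (hn : 2 ≤ n) (α : ℝ) (hα : α ∈ Set.Ioc 0 (1/2 : ℝ)) :
    Fq (srpe α n) / |corrX (srpe α n)| < 2 ↔ α < 1 / ((n : ℝ) - 1) := by
  obtain ⟨hα0, hα2⟩ := hα
  have h1 : α ≤ 1 := by linarith
  have h0 : (0:ℝ) ≤ α := le_of_lt hα0
  have hm : (2:ℝ) ≤ (n:ℝ) := by exact_mod_cast hn
  set m : ℝ := (n:ℝ) with hmdef
  have hcpos : 0 < m - 1 := by linarith
  have hc : m - 1 ≠ 0 := ne_of_gt hcpos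
  have hm2 : 0 ≤ m - 2 := by linarith
  have h1a : 0 < 1 - α := by linarith
  have hsa : 0 < Real.sqrt α := Real.sqrt_pos.mpr hα0
  have hs1a : 0 < Real.sqrt (1-α) := Real.sqrt_pos.mpr h1a
  have hX := srpe_corrX α n hc h0 h1
  have hXpos : 0 < corrX (srpe α n) := by
    rw [hX]; positivity
  have hFq : Fq (srpe α n) = 4*α*Real.sqrt (m-2) / (m-1) := by
    rw [Fq, srpe_blochA α n hc h0 h1, srpe_blochB α n hc h0 h1, srpe_corrZ α n hc h0 h1]
    have e1 : (1 + (1 - 2*α))^2 - ((1 - 2*α/(m-1)) + (1 - 2*α*(m-2)/(m-1)))^2 = 0 := by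
      field_simp
      ring
    have hsq : Real.sqrt (m-2) ^ 2 = m - 2 := Real.sq_sqrt hm2
    have e2 : (1 - (1 - 2*α))^2 - ((1 - 2*α/(m-1)) - (1 - 2*α*(m-2)/(m-1)))^2
        = (4*α*Real.sqrt (m-2) / (m-1))^2 := by
      field_simp
      nlinarith [hsq]
    rw [e1, e2, Real.sqrt_zero, Real.sqrt_sq (by positivity)]
    ring
  rw [hFq, abs_of_pos hXpos, hX]
  rw [div_lt_iff₀ (by positivity)]
  have key : 4*α*Real.sqrt (m-2) / (m-1) < 2 * (2 * Real.sqrt α * Real.sqrt (1-α) / (m-1))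
      ↔ α * Real.sqrt (m-2) < Real.sqrt α * Real.sqrt (1-α) := by
    rw [div_lt_iff₀ hcpos]
    have e : 2 * (2 * Real.sqrt α * Real.sqrt (1-α) / (m-1)) * (m-1) = 4*(Real.sqrt α * Real.sqrt (1-α)) := by
      field_simp; ring
    rw [e]
    constructor <;> intro h <;> nlinarith
  rw [key]
  have lhs_eq : α * Real.sqrt (m-2) = Real.sqrt (α^2 * (m-2)) := by
    rw [Real.sqrt_mul (by positivity), Real.sqrt_sq h0]
  have rhs_eq : Real.sqrt α * Real.sqrt (1-α) = Real.sqrt (α * (1-α)) := by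
    rw [Real.sqrt_mul h0]
  rw [lhs_eq, rhs_eq, Real.sqrt_lt_sqrt_iff (by positivity)]
  rw [lt_div_iff₀ hcpos]
  constructor <;> intro h
  · nlinarith
  · nlinarith

end
end

section
/- For the bipartite reduced SRPE state, Alice can steer Bob with the three-measurement strategy 𝓜₃ (criterion F/t⊥ < 2√2) if and only if α < 2/n. -/
open Matrix
open scoped Matrix Kronecker ComplexOrder

noncomputable section

lemma pauliExp_linear (c d : ℝ) (ρ τ : Matrix Q2 Q2 ℂ) (A B : Matrix (Fin 2) (Fin 2) ℂ) :
    pauliExp ((c:ℂ) • ρ + (d:ℂ) • τ) A B = c * pauliExp ρ A B + d * pauliExp τ A B := by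
  simp [pauliExp, Matrix.add_mul, Matrix.smul_mul, Matrix.trace_add, Matrix.trace_smul,
    Complex.mul_re]

lemma trace_rhoAlpha (α : ℝ) (M : Matrix Q2 Q2 ℂ) :
    Matrix.trace (rhoAlpha α * M) =
      ((Real.sqrt (1-α) : ℂ) * Real.sqrt (1-α)) * M (0,0) (0,0)
      + (Real.sqrt α : ℂ) * Real.sqrt (1-α) * (M (1,1) (0,0) + M (0,0) (1,1))
      + ((Real.sqrt α : ℂ) * Real.sqrt α) * M (1,1) (1,1) := by
  simp only [Matrix.trace, Matrix.diag, Matrix.mul_apply, rhoAlpha, ketPsi, Matrix.of_apply,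
    Fintype.sum_prod_type, Fin.sum_univ_two]
  norm_num
  ring

lemma pauliExp_kron (ρ1B ρ0B A B : Matrix (Fin 2) (Fin 2) ℂ) :
    Matrix.trace ((ρ1B ⊗ₖ ρ0B) * (A ⊗ₖ B)) = Matrix.trace (ρ1B * A) * Matrix.trace (ρ0B * B) := by
  rw [← Matrix.mul_kronecker_mul, Matrix.trace_kronecker]

lemma pauliExp_srpe (α : ℝ) (n : ℕ) (A B : Matrix (Fin 2) (Fin 2) ℂ) :
    pauliExp (srpe α n) A B = (1/((n:ℝ)-1)) * (Matrix.trace (rhoAlpha α * (A ⊗ₖ B))).re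
      + (((n:ℝ)-2)/((n:ℝ)-1)) * (Matrix.trace ((rho1 α ⊗ₖ rho0) * (A ⊗ₖ B))).re := by
  unfold srpe
  rw [pauliExp_linear]
  rfl

lemma blochA_srpe (α : ℝ) (n : ℕ) (h0 : 0 ≤ α) (h1 : α ≤ 1) :
    blochA (srpe α n) = (1/((n:ℝ)-1)) * (1-2*α) + (((n:ℝ)-2)/((n:ℝ)-1)) * (1-2*α) := by
  unfold blochA
  rw [pauliExp_srpe, trace_rhoAlpha, pauliExp_kron]
  simp [σz, rho1, rho0, Matrix.kroneckerMap_apply, Matrix.one_apply,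
    Matrix.trace_fin_two, Matrix.mul_apply, Fin.sum_univ_two,
    ← Complex.ofReal_mul, Real.mul_self_sqrt, h0, sub_nonneg.mpr h1,
    Complex.sub_re, Complex.ofReal_re]
  first | ring1 | (left; ring1) | tauto

lemma blochB_srpe (α : ℝ) (n : ℕ) (h0 : 0 ≤ α) (h1 : α ≤ 1) :
    blochB (srpe α n) = (1/((n:ℝ)-1)) * (1-2*α) + (((n:ℝ)-2)/((n:ℝ)-1)) := by
  unfold blochB
  rw [pauliExp_srpe, trace_rhoAlpha, pauliExp_kron]
  simp [σz, rho1, rho0, Matrix.kroneckerMap_apply, Matrix.one_apply,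
    Matrix.trace_fin_two, Matrix.mul_apply, Fin.sum_univ_two,
    ← Complex.ofReal_mul, Real.mul_self_sqrt, h0, sub_nonneg.mpr h1,
    Complex.sub_re, Complex.ofReal_re]
  first | ring1 | (left; ring1) | tauto

lemma corrZ_srpe (α : ℝ) (n : ℕ) (h0 : 0 ≤ α) (h1 : α ≤ 1) :
    corrZ (srpe α n) = (1/((n:ℝ)-1)) + (((n:ℝ)-2)/((n:ℝ)-1)) * (1-2*α) := by
  unfold corrZ
  rw [pauliExp_srpe, trace_rhoAlpha, pauliExp_kron]
  simp [σz, rho1, rho0, Matrix.kroneckerMap_apply,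
    Matrix.trace_fin_two, Matrix.mul_apply, Fin.sum_univ_two,
    ← Complex.ofReal_mul, Real.mul_self_sqrt, h0, sub_nonneg.mpr h1,
    Complex.sub_re, Complex.add_re, Complex.ofReal_re]
  first | ring1 | (left; ring1) | tauto

lemma corrX_srpe (α : ℝ) (n : ℕ) :
    corrX (srpe α n) = (1/((n:ℝ)-1)) * (2 * (Real.sqrt α * Real.sqrt (1-α))) := by
  unfold corrX
  rw [pauliExp_srpe, trace_rhoAlpha, pauliExp_kron]
  simp [σx, rho1, rho0, Matrix.kroneckerMap_apply,
    Matrix.trace_fin_two, Matrix.mul_apply, Fin.sum_univ_two,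
    ← Complex.ofReal_mul, Complex.add_re, Complex.ofReal_re]
  first | ring1 | (left; ring1) | tauto

/-- For the bipartite reduced SRPE state, Alice can steer Bob with the
three-measurement strategy `𝓜₃` (criterion `F/t⊥ < 2√2`) iff `α < 2/n`. -/
theorem stmt9 (n : ℕ) (hn : 3 ≤ n) (α : ℝ) (hα : α ∈ Set.Ioc 0 (1/2 : ℝ)) :
    Fq (srpe α n) / |corrX (srpe α n)| < 2 * Real.sqrt 2 ↔ α < 2 / (n : ℝ) := by
  obtain ⟨h0, h12⟩ := hα
  have h0' : (0:ℝ) ≤ α := le_of_lt h0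
  have hα1 : α ≤ 1 := by linarith
  have hN3 : (3:ℝ) ≤ (n:ℝ) := by exact_mod_cast hn
  have hN1 : (0:ℝ) < (n:ℝ) - 1 := by linarith
  have hN2 : (0:ℝ) < (n:ℝ) - 2 := by linarith
  have h1mα : (0:ℝ) < 1 - α := by linarith
  have sa : 0 < Real.sqrt α := Real.sqrt_pos.mpr h0
  have sb : 0 < Real.sqrt (1-α) := Real.sqrt_pos.mpr h1mα
  have sn : 0 < Real.sqrt ((n:ℝ)-2) := Real.sqrt_pos.mpr hN2
  have hα_eq : Real.sqrt α * Real.sqrt α = α := Real.mul_self_sqrt h0'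
  have hb_eq : Real.sqrt (1-α) * Real.sqrt (1-α) = 1-α := Real.mul_self_sqrt h1mα.le
  have hA := blochA_srpe α n h0' hα1
  have hB := blochB_srpe α n h0' hα1
  have hZ := corrZ_srpe α n h0' hα1
  have hX := corrX_srpe α n
  have hF : Fq (srpe α n) = 4*α*Real.sqrt ((n:ℝ)-2)/((n:ℝ)-1) := by
    unfold Fq
    have e1 : (1 + blochA (srpe α n))^2 - (blochB (srpe α n) + corrZ (srpe α n))^2 = 0 := by
      rw [hA, hB, hZ]; field_simp; ring
    have e2 : (1 - blochA (srpe α n))^2 - (blochB (srpe α n) - corrZ (srpe α n))^2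
        = 16*α^2*((n:ℝ)-2)/((n:ℝ)-1)^2 := by
      rw [hA, hB, hZ]; field_simp; ring
    rw [e1, e2, Real.sqrt_zero]
    rw [show 16*α^2*((n:ℝ)-2)/((n:ℝ)-1)^2 = (4*α*Real.sqrt ((n:ℝ)-2)/((n:ℝ)-1))^2 by
      rw [div_pow, mul_pow, mul_pow, Real.sq_sqrt hN2.le]; ring]
    rw [Real.sqrt_sq (by positivity)]
    ring
  have hXpos : 0 < corrX (srpe α n) := by rw [hX]; positivity
  rw [hF, abs_of_pos hXpos, hX]
  have hL : 4*α*Real.sqrt ((n:ℝ)-2)/((n:ℝ)-1) / ((1/((n:ℝ)-1)) * (2*(Real.sqrt α*Real.sqrt (1-α))))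
      = 2*(Real.sqrt α * Real.sqrt ((n:ℝ)-2)) / Real.sqrt (1-α) := by
    field_simp
    linear_combination (-4) * hα_eq
  rw [hL, div_lt_iff₀ sb]
  rw [show 2*(Real.sqrt α * Real.sqrt ((n:ℝ)-2)) = 2 * Real.sqrt (α * ((n:ℝ)-2)) by
    rw [Real.sqrt_mul h0']]
  rw [show 2*Real.sqrt 2 * Real.sqrt (1-α) = 2 * Real.sqrt (2*(1-α)) by
    rw [Real.sqrt_mul (by norm_num : (0:ℝ) ≤ 2)]; ring]
  rw [mul_lt_mul_iff_right₀ two_pos, Real.sqrt_lt_sqrt_iff (by positivity)]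
  have hNpos : (0:ℝ) < (n:ℝ) := by linarith
  rw [lt_div_iff₀ hNpos]
  constructor <;> intro h <;> nlinarith
end
end

section
/- For the bipartite reduced SRPE state, Alice can steer Bob with equatorial measurements 𝓜ᴱ (criterion F/t⊥ < π) if and only if α < π²/(4(n-2) + π²). -/
open Matrix
open scoped Matrix Kronecker ComplexOrder

noncomputable section

lemma pauliExp_lin (r s : ℝ) (ρ τ : Matrix Q2 Q2 ℂ) (A B : Matrix (Fin 2) (Fin 2) ℂ) :
    pauliExp ((r:ℂ) • ρ + (s:ℂ) • τ) A B = r * pauliExp ρ A B + s * pauliExp τ A B := by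
  simp [pauliExp, Matrix.add_mul, Matrix.smul_mul, Complex.re_ofReal_mul]

section comps
variable (α : ℝ)

lemma peA1 (h0 : 0 ≤ α) (h1 : α ≤ 1) : pauliExp (rhoAlpha α) σz 1 = 1 - 2*α := by
  simp only [pauliExp, Matrix.trace, Matrix.diag, Matrix.mul_apply,
    Fintype.sum_prod_type, Fin.sum_univ_two, rhoAlpha, Matrix.of_apply, ketPsi,
    kroneckerMap_apply, σz, Matrix.one_apply, Matrix.cons_val', Matrix.cons_val_zero,
    Matrix.cons_val_one, Matrix.head_cons, Matrix.empty_val', Matrix.cons_val_fin_one]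
  norm_num [← Complex.ofReal_mul]
  rw [Real.mul_self_sqrt h0, Real.mul_self_sqrt (by linarith : (0:ℝ) ≤ 1 - α)]
  ring

lemma peA2 : pauliExp (rho1 α ⊗ₖ rho0) σz 1 = 1 - 2*α := by
  simp only [pauliExp, Matrix.trace, Matrix.diag, Matrix.mul_apply,
    Fintype.sum_prod_type, Fin.sum_univ_two, rho1, rho0,
    kroneckerMap_apply, σz, Matrix.one_apply, Matrix.cons_val', Matrix.cons_val_zero,
    Matrix.cons_val_one, Matrix.head_cons, Matrix.empty_val', Matrix.cons_val_fin_one]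
  norm_num
  ring

lemma peB1 (h0 : 0 ≤ α) (h1 : α ≤ 1) : pauliExp (rhoAlpha α) 1 σz = 1 - 2*α := by
  simp only [pauliExp, Matrix.trace, Matrix.diag, Matrix.mul_apply,
    Fintype.sum_prod_type, Fin.sum_univ_two, rhoAlpha, Matrix.of_apply, ketPsi,
    kroneckerMap_apply, σz, Matrix.one_apply, Matrix.cons_val', Matrix.cons_val_zero,
    Matrix.cons_val_one, Matrix.head_cons, Matrix.empty_val', Matrix.cons_val_fin_one]
  norm_num [← Complex.ofReal_mul]
  rw [Real.mul_self_sqrt h0, Real.mul_self_sqrt (by linarith : (0:ℝ) ≤ 1 - α)]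
  ring

lemma peB2 : pauliExp (rho1 α ⊗ₖ rho0) 1 σz = 1 := by
  simp only [pauliExp, Matrix.trace, Matrix.diag, Matrix.mul_apply,
    Fintype.sum_prod_type, Fin.sum_univ_two, rho1, rho0,
    kroneckerMap_apply, σz, Matrix.one_apply, Matrix.cons_val', Matrix.cons_val_zero,
    Matrix.cons_val_one, Matrix.head_cons, Matrix.empty_val', Matrix.cons_val_fin_one]
  norm_num

lemma peZ1 (h0 : 0 ≤ α) (h1 : α ≤ 1) : pauliExp (rhoAlpha α) σz σz = 1 := by
  simp only [pauliExp, Matrix.trace, Matrix.diag, Matrix.mul_apply,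
    Fintype.sum_prod_type, Fin.sum_univ_two, rhoAlpha, Matrix.of_apply, ketPsi,
    kroneckerMap_apply, σz, Matrix.one_apply, Matrix.cons_val', Matrix.cons_val_zero,
    Matrix.cons_val_one, Matrix.head_cons, Matrix.empty_val', Matrix.cons_val_fin_one]
  norm_num [← Complex.ofReal_mul]
  rw [Real.mul_self_sqrt h0, Real.mul_self_sqrt (by linarith : (0:ℝ) ≤ 1 - α)]
  ring

lemma peZ2 : pauliExp (rho1 α ⊗ₖ rho0) σz σz = 1 - 2*α := by
  simp only [pauliExp, Matrix.trace, Matrix.diag, Matrix.mul_apply,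
    Fintype.sum_prod_type, Fin.sum_univ_two, rho1, rho0,
    kroneckerMap_apply, σz, Matrix.one_apply, Matrix.cons_val', Matrix.cons_val_zero,
    Matrix.cons_val_one, Matrix.head_cons, Matrix.empty_val', Matrix.cons_val_fin_one]
  norm_num
  ring

lemma peX1 : pauliExp (rhoAlpha α) σx σx = 2 * (Real.sqrt α * Real.sqrt (1 - α)) := by
  simp only [pauliExp, Matrix.trace, Matrix.diag, Matrix.mul_apply,
    Fintype.sum_prod_type, Fin.sum_univ_two, rhoAlpha, Matrix.of_apply, ketPsi,
    kroneckerMap_apply, σx, Matrix.one_apply, Matrix.cons_val', Matrix.cons_val_zero,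
    Matrix.cons_val_one, Matrix.head_cons, Matrix.empty_val', Matrix.cons_val_fin_one]
  norm_num [← Complex.ofReal_mul]
  ring

lemma peX2 : pauliExp (rho1 α ⊗ₖ rho0) σx σx = 0 := by
  simp only [pauliExp, Matrix.trace, Matrix.diag, Matrix.mul_apply,
    Fintype.sum_prod_type, Fin.sum_univ_two, rho1, rho0,
    kroneckerMap_apply, σx, Matrix.one_apply, Matrix.cons_val', Matrix.cons_val_zero,
    Matrix.cons_val_one, Matrix.head_cons, Matrix.empty_val', Matrix.cons_val_fin_one]
  norm_num
end comps

/-- For the bipartite reduced SRPE state, Alice can steer Bob with equatorial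
measurements `𝓜ᴱ` (criterion `F/t⊥ < π`) iff `α < π²/(4(n-2) + π²)`. -/
theorem stmt10 (n : ℕ) (hn : 3 ≤ n) (α : ℝ) (hα : α ∈ Set.Ioc 0 (1/2 : ℝ)) :
    Fq (srpe α n) / |corrX (srpe α n)| < Real.pi ↔
      α < Real.pi^2 / (4 * ((n : ℝ) - 2) + Real.pi^2) := by
  obtain ⟨hα0, hα1⟩ := hα
  have h0 : (0:ℝ) ≤ α := hα0.le
  have h1 : α ≤ 1 := by linarith
  have hν : (3:ℝ) ≤ (n:ℝ) := by exact_mod_cast hn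
  have hm : ((n:ℝ) - 1) ≠ 0 := by linarith
  have hmpos : (0:ℝ) < (n:ℝ) - 1 := by linarith
  set sa := Real.sqrt α with hsa
  set sb := Real.sqrt (1 - α) with hsb
  set sc := Real.sqrt ((n:ℝ) - 2) with hsc
  have hsa2 : sa * sa = α := Real.mul_self_sqrt h0
  have hsb2 : sb * sb = 1 - α := Real.mul_self_sqrt (by linarith)
  have hsc2 : sc * sc = (n:ℝ) - 2 := Real.mul_self_sqrt (by linarith)
  have hsapos : 0 < sa := Real.sqrt_pos.2 hα0
  have hsbpos : 0 < sb := Real.sqrt_pos.2 (by linarith)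
  have hscpos : 0 < sc := Real.sqrt_pos.2 (by linarith)
  have hA : blochA (srpe α n) = 1 - 2*α := by
    rw [blochA, srpe, pauliExp_lin, peA1 α h0 h1, peA2]
    field_simp
    ring
  have hB : blochB (srpe α n) = (1/((n:ℝ)-1)) * (1 - 2*α) + ((n:ℝ)-2)/((n:ℝ)-1) := by
    rw [blochB, srpe, pauliExp_lin, peB1 α h0 h1, peB2]
    ring
  have hZ : corrZ (srpe α n) = (1/((n:ℝ)-1)) + ((n:ℝ)-2)/((n:ℝ)-1) * (1 - 2*α) := by
    rw [corrZ, srpe, pauliExp_lin, peZ1 α h0 h1, peZ2]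
    ring
  have hX : corrX (srpe α n) = 2 * (sa * sb) / ((n:ℝ)-1) := by
    rw [corrX, srpe, pauliExp_lin, peX1, peX2]
    field_simp
    simp only [mul_zero, add_zero, hsa, hsb]
  have hXpos : 0 < corrX (srpe α n) := by
    rw [hX]; positivity
  have hFq : Fq (srpe α n) = 4 * α * sc / ((n:ℝ)-1) := by
    rw [Fq, hA, hB, hZ]
    have e1 : (1 + (1 - 2*α))^2 -
        ((1/((n:ℝ)-1)) * (1 - 2*α) + ((n:ℝ)-2)/((n:ℝ)-1)
          + ((1/((n:ℝ)-1)) + ((n:ℝ)-2)/((n:ℝ)-1) * (1 - 2*α)))^2 = 0 := by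
      field_simp
      ring
    have e2 : (1 - (1 - 2*α))^2 -
        ((1/((n:ℝ)-1)) * (1 - 2*α) + ((n:ℝ)-2)/((n:ℝ)-1)
          - ((1/((n:ℝ)-1)) + ((n:ℝ)-2)/((n:ℝ)-1) * (1 - 2*α)))^2
        = (4 * α * sc / ((n:ℝ)-1))^2 := by
      have : (4 * α * sc / ((n:ℝ)-1))^2 = 16 * α^2 * ((n:ℝ)-2) / ((n:ℝ)-1)^2 := by
        rw [div_pow]
        rw [show (4 * α * sc)^2 = 16 * α^2 * (sc * sc) by ring, hsc2]
      rw [this]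
      field_simp
      ring
    rw [e1, e2, Real.sqrt_zero, Real.sqrt_sq (by positivity)]
    ring
  have hLHS : Fq (srpe α n) / |corrX (srpe α n)| = 2 * sa * sc / sb := by
    rw [abs_of_pos hXpos, hFq, hX]
    field_simp
    rw [← hsa2]
    ring
  rw [hLHS]
  clear hLHS hFq hXpos hX hZ hB hA
  clear_value sa sb sc
  have hπ : (0:ℝ) < Real.pi := Real.pi_pos
  have hden : (0:ℝ) < 4 * ((n:ℝ) - 2) + Real.pi^2 := by nlinarith
  have q1 : (2*sa*sc)^2 = 4*(α*((n:ℝ)-2)) := by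
    rw [show (2*sa*sc)^2 = 4*((sa*sa)*(sc*sc)) by ring, hsa2, hsc2]
  have q2 : (Real.pi*sb)^2 = Real.pi^2*(1-α) := by
    rw [show (Real.pi*sb)^2 = Real.pi^2*(sb*sb) by ring, hsb2]
  rw [div_lt_iff₀ hsbpos, lt_div_iff₀ hden]
  constructor
  · intro h
    have h4 : (2*sa*sc)^2 < (Real.pi*sb)^2 :=
      pow_lt_pow_left₀ h (by positivity) (by norm_num)
    rw [q1, q2] at h4
    ring_nf at h4 ⊢
    linarith
  · intro h
    refine lt_of_pow_lt_pow_left₀ 2 (by positivity) ?_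
    rw [q1, q2]
    ring_nf at h ⊢
    linarith

end
end

section
/- For the bipartite reduced SRPE state with Alice and Bob exchanged, the steering criterion F'/t⊥ < 2√2 (three measurements) holds if and only if n < 3, and the criterion F'/t⊥ < π (equatorial measurements) holds if and only if n < (3 + √(1+π²))/2. -/
open Matrix
open scoped Matrix Kronecker ComplexOrder

noncomputable section

/-- The bipartite reduced SRPE state (real parameter `n`). -/
def srpeR (α n : ℝ) : Matrix Q2 Q2 ℂ :=
  (((1 / (n - 1) : ℝ)) : ℂ) • rhoAlpha α
    + ((((n - 2) / (n - 1) : ℝ)) : ℂ) • (rho1 α ⊗ₖ rho0)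

/-- The quantity `F` with the roles of Alice and Bob exchanged (`a ↔ b`). -/
def Fq' (ρ : Matrix Q2 Q2 ℂ) : ℝ :=
  Real.sqrt ((1 + blochB ρ)^2 - (blochA ρ + corrZ ρ)^2)
    + Real.sqrt ((1 - blochB ρ)^2 - (blochA ρ - corrZ ρ)^2)


lemma comb_blochA (p q α : ℝ) (h0 : 0 ≤ α) (h1 : α ≤ 1) :
    blochA ((p:ℂ) • rhoAlpha α + (q:ℂ) • (rho1 α ⊗ₖ rho0)) = (p+q)*(1-2*α) := by
  simp [blochA, pauliExp, rhoAlpha, rho1, rho0, ketPsi, σz, Matrix.trace,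
    Matrix.mul_apply, Fintype.sum_prod_type, Fin.sum_univ_two,
    Matrix.kroneckerMap_apply, Matrix.one_apply,
    Real.mul_self_sqrt h0, Real.mul_self_sqrt (by linarith : (0:ℝ) ≤ 1 - α)]
  ring

lemma comb_blochB (p q α : ℝ) (h0 : 0 ≤ α) (h1 : α ≤ 1) :
    blochB ((p:ℂ) • rhoAlpha α + (q:ℂ) • (rho1 α ⊗ₖ rho0)) = (p+q)*(1-α) + (q-p)*α := by
  simp [blochB, pauliExp, rhoAlpha, rho1, rho0, ketPsi, σz, Matrix.trace,
    Matrix.mul_apply, Fintype.sum_prod_type, Fin.sum_univ_two,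
    Matrix.kroneckerMap_apply, Matrix.one_apply,
    Real.mul_self_sqrt h0, Real.mul_self_sqrt (by linarith : (0:ℝ) ≤ 1 - α)]
  ring

lemma comb_corrZ (p q α : ℝ) (h0 : 0 ≤ α) (h1 : α ≤ 1) :
    corrZ ((p:ℂ) • rhoAlpha α + (q:ℂ) • (rho1 α ⊗ₖ rho0)) = (p+q)*(1-α) + (p-q)*α := by
  simp [corrZ, pauliExp, rhoAlpha, rho1, rho0, ketPsi, σz, Matrix.trace,
    Matrix.mul_apply, Fintype.sum_prod_type, Fin.sum_univ_two,
    Matrix.kroneckerMap_apply, Matrix.one_apply,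
    Real.mul_self_sqrt h0, Real.mul_self_sqrt (by linarith : (0:ℝ) ≤ 1 - α)]
  ring

lemma comb_corrX (p q α : ℝ) :
    corrX ((p:ℂ) • rhoAlpha α + (q:ℂ) • (rho1 α ⊗ₖ rho0)) = 2*p*(Real.sqrt α * Real.sqrt (1-α)) := by
  simp [corrX, pauliExp, rhoAlpha, rho1, rho0, ketPsi, σx, Matrix.trace,
    Matrix.mul_apply, Fintype.sum_prod_type, Fin.sum_univ_two,
    Matrix.kroneckerMap_apply, Matrix.one_apply]
  ring

lemma srpe_ratio (n : ℝ) (hn : 2 ≤ n) (α : ℝ) (hα : α ∈ Set.Ioo 0 (1/2 : ℝ)) :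
    Fq' (srpeR α n) / |corrX (srpeR α n)| = 2 * (Real.sqrt (n-2) * Real.sqrt (n-1)) := by
  obtain ⟨hα0, hα2⟩ := hα
  have h0 : (0:ℝ) ≤ α := le_of_lt hα0
  have h1 : α ≤ 1 := by linarith
  have hn1 : (0:ℝ) < n - 1 := by linarith
  have hn2 : (0:ℝ) ≤ n - 2 := by linarith
  set p : ℝ := 1 / (n-1) with hp
  set q : ℝ := (n-2) / (n-1) with hq
  have hsr : srpeR α n = (p:ℂ) • rhoAlpha α + (q:ℂ) • (rho1 α ⊗ₖ rho0) := rfl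
  have hA := comb_blochA p q α h0 h1
  have hB := comb_blochB p q α h0 h1
  have hZ := comb_corrZ p q α h0 h1
  have hX := comb_corrX p q α
  set s : ℝ := Real.sqrt α * Real.sqrt (1-α) with hs
  have hspos : 0 < s := mul_pos (Real.sqrt_pos.2 hα0) (Real.sqrt_pos.2 (by linarith))
  have hppos : 0 < p := by positivity
  have hqnn : 0 ≤ q := by positivity
  have hsq2 : (4 * Real.sqrt q * s)^2 = 16*q*(α*(1-α)) := by
    rw [hs, show (4 * Real.sqrt q * (Real.sqrt α * Real.sqrt (1-α)))^2
      = 16*((Real.sqrt q)^2)*((Real.sqrt α)^2)*((Real.sqrt (1-α))^2) by ring,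
      Real.sq_sqrt hqnn, Real.sq_sqrt h0, Real.sq_sqrt (by linarith : (0:ℝ) ≤ 1-α)]
    ring
  have e1 : (1 + blochB (srpeR α n))^2 - (blochA (srpeR α n) + corrZ (srpeR α n))^2
      = (4 * Real.sqrt q * s)^2 := by
    rw [hsr, hA, hB, hZ, hsq2, hp, hq]
    field_simp
    ring
  have e2 : (1 - blochB (srpeR α n))^2 - (blochA (srpeR α n) - corrZ (srpeR α n))^2 = 0 := by
    rw [hsr, hA, hB, hZ, hp, hq]
    field_simp
    ring
  have hF : Fq' (srpeR α n) = 4 * Real.sqrt q * s := by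
    rw [Fq', e1, e2, Real.sqrt_zero, Real.sqrt_sq (by positivity), add_zero]
  have hXval : |corrX (srpeR α n)| = 2 * p * s := by
    rw [hsr, hX, abs_of_pos (by positivity)]
  rw [hF, hXval]
  have hsq : Real.sqrt q = Real.sqrt (n-2) / Real.sqrt (n-1) := by
    rw [hq, Real.sqrt_div hn2]
  have hsn1 : (0:ℝ) < Real.sqrt (n-1) := Real.sqrt_pos.2 hn1
  have hsn1sq : Real.sqrt (n-1) * Real.sqrt (n-1) = n - 1 := Real.mul_self_sqrt (le_of_lt hn1)
  rw [hsq, hp]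
  field_simp
  linear_combination (-4 * Real.sqrt (n-2)) * hsn1sq

/-- For the SRPE reduced state with Alice and Bob exchanged: `F'/t⊥ < 2√2` iff
`n < 3`, and `F'/t⊥ < π` iff `n < (3 + √(1+π²))/2`. -/
theorem stmt12 (n : ℝ) (hn : 2 ≤ n) (α : ℝ) (hα : α ∈ Set.Ioo 0 (1/2 : ℝ)) :
    (Fq' (srpeR α n) / |corrX (srpeR α n)| < 2 * Real.sqrt 2 ↔ n < 3) ∧
    (Fq' (srpeR α n) / |corrX (srpeR α n)| < Real.pi ↔
      n < (3 + Real.sqrt (1 + Real.pi^2)) / 2) := by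
  have hn2 : (0:ℝ) ≤ n - 2 := by linarith
  have hratio : Fq' (srpeR α n) / |corrX (srpeR α n)|
      = 2 * Real.sqrt ((n-2)*(n-1)) := by
    rw [srpe_ratio n hn α hα, ← Real.sqrt_mul hn2]
  rw [hratio]
  have hKnn : (0:ℝ) ≤ (n-2)*(n-1) := by nlinarith
  constructor
  · rw [mul_lt_mul_iff_right₀ (by norm_num : (0:ℝ) < 2), Real.sqrt_lt_sqrt_iff hKnn]
    constructor <;> intro h <;> nlinarith
  · have hpi : (0:ℝ) < Real.pi / 2 := by positivity
    have h2 : 2 * Real.sqrt ((n-2)*(n-1)) < Real.pi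
        ↔ Real.sqrt ((n-2)*(n-1)) < Real.pi / 2 := by
      constructor <;> intro h <;> linarith
    rw [h2, Real.sqrt_lt' hpi]
    have hr : (0:ℝ) < Real.sqrt (1 + Real.pi^2) := Real.sqrt_pos.2 (by positivity)
    have hr2 : (Real.sqrt (1 + Real.pi^2))^2 = 1 + Real.pi^2 := Real.sq_sqrt (by positivity)
    constructor
    · intro h
      nlinarith [sq_nonneg (2*n - 3 - Real.sqrt (1 + Real.pi^2)), hr, hr2]
    · intro h
      nlinarith [mul_pos (show (0:ℝ) < Real.sqrt (1 + Real.pi^2) - (2*n-3) by linarith)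
        (show (0:ℝ) < Real.sqrt (1 + Real.pi^2) + (2*n-3) by linarith), hr2]

end
end

section
/- For the bipartite reduced R(n/2)PE state, the quantity F/t⊥ appearing in the steering criterion equals 2√(n-2)·(√(αη) + √((1-α)(n-η))), where η = 1 + α(n-2). -/
open Matrix
open scoped Matrix Kronecker ComplexOrder

noncomputable section

set_option maxHeartbeats 2000000 in
/-- For the bipartite reduced R(n/2)PE state,
`F/t⊥ = 2√(n-2)·(√(αη) + √((1-α)(n-η)))` with `η = 1 + α(n-2)`. -/
theorem stmt13 (n : ℕ) (hn : 4 ≤ n) (hne : Even n) (α : ℝ)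
    (hα : α ∈ Set.Ioc 0 (1/2 : ℝ)) (η : ℝ) (hη : η = 1 + α * ((n : ℝ) - 2)) :
    Fq (rn2pe α n) / |corrX (rn2pe α n)| =
      2 * Real.sqrt ((n : ℝ) - 2) *
        (Real.sqrt (α * η) + Real.sqrt ((1 - α) * ((n : ℝ) - η))) := by
  obtain ⟨hα0, hα2⟩ := hα
  have hN : (4:ℝ) ≤ (n:ℝ) := by exact_mod_cast hn
  have hn1 : (0:ℝ) < (n:ℝ) - 1 := by linarith
  have hn2 : (0:ℝ) ≤ (n:ℝ) - 2 := by linarith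
  have h1α : (0:ℝ) < 1 - α := by linarith
  have hsC : ((Real.sqrt α : ℂ)) * (Real.sqrt α) = (α : ℝ) := by
    rw [← Complex.ofReal_mul, Real.mul_self_sqrt hα0.le]
  have htC : ((Real.sqrt (1-α) : ℂ)) * (Real.sqrt (1-α)) = 1 - (α:ℂ) := by
    rw [← Complex.ofReal_mul, Real.mul_self_sqrt h1α.le]; push_cast; ring
  have ha : blochA (rn2pe α n) =
      (1/((n:ℝ)-1))*(1-2*α) + (((n:ℝ)-2)/((n:ℝ)-1))*(1-2*α) := by
    rw [blochA, pauliExp, show Matrix.trace (rn2pe α n * (σz ⊗ₖ (1:Matrix (Fin 2) (Fin 2) ℂ))) =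
        (((1/((n:ℝ)-1))*(1-2*α) + (((n:ℝ)-2)/((n:ℝ)-1))*(1-2*α) : ℝ) : ℂ) from ?_,
      Complex.ofReal_re]
    simp only [rn2pe, rhoAlpha, rho1, ketPsi, σz, Matrix.trace, Matrix.mul_apply,
      Fintype.sum_prod_type, Fin.sum_univ_two, Matrix.one_apply, kroneckerMap_apply,
      Matrix.add_apply, Matrix.smul_apply, Matrix.of_apply, Matrix.diag_apply,
      Matrix.cons_val', Matrix.cons_val_zero, Matrix.cons_val_one, Matrix.head_cons,
      Matrix.head_fin_const, Matrix.empty_val', Matrix.cons_val_fin_one, smul_eq_mul]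
    push_cast
    simp only [Complex.star_def, Complex.conj_ofReal]
    norm_num
    linear_combination ((-1+(n:ℂ))⁻¹) * htC - ((-1+(n:ℂ))⁻¹) * hsC
  have hb : blochB (rn2pe α n) =
      (1/((n:ℝ)-1))*(1-2*α) + (((n:ℝ)-2)/((n:ℝ)-1))*(1-2*α) := by
    rw [blochB, pauliExp, show Matrix.trace (rn2pe α n * ((1:Matrix (Fin 2) (Fin 2) ℂ) ⊗ₖ σz)) =
        (((1/((n:ℝ)-1))*(1-2*α) + (((n:ℝ)-2)/((n:ℝ)-1))*(1-2*α) : ℝ) : ℂ) from ?_,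
      Complex.ofReal_re]
    simp only [rn2pe, rhoAlpha, rho1, ketPsi, σz, Matrix.trace, Matrix.mul_apply,
      Fintype.sum_prod_type, Fin.sum_univ_two, Matrix.one_apply, kroneckerMap_apply,
      Matrix.add_apply, Matrix.smul_apply, Matrix.of_apply, Matrix.diag_apply,
      Matrix.cons_val', Matrix.cons_val_zero, Matrix.cons_val_one, Matrix.head_cons,
      Matrix.head_fin_const, Matrix.empty_val', Matrix.cons_val_fin_one, smul_eq_mul]
    push_cast
    simp only [Complex.star_def, Complex.conj_ofReal]
    norm_num
    linear_combination ((-1+(n:ℂ))⁻¹) * htC - ((-1+(n:ℂ))⁻¹) * hsC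
  have hz : corrZ (rn2pe α n) =
      (1/((n:ℝ)-1)) + (((n:ℝ)-2)/((n:ℝ)-1))*(1-2*α)^2 := by
    rw [corrZ, pauliExp, show Matrix.trace (rn2pe α n * (σz ⊗ₖ σz)) =
        (((1/((n:ℝ)-1)) + (((n:ℝ)-2)/((n:ℝ)-1))*(1-2*α)^2 : ℝ) : ℂ) from ?_,
      Complex.ofReal_re]
    simp only [rn2pe, rhoAlpha, rho1, ketPsi, σz, Matrix.trace, Matrix.mul_apply,
      Fintype.sum_prod_type, Fin.sum_univ_two, Matrix.one_apply, kroneckerMap_apply,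
      Matrix.add_apply, Matrix.smul_apply, Matrix.of_apply, Matrix.diag_apply,
      Matrix.cons_val', Matrix.cons_val_zero, Matrix.cons_val_one, Matrix.head_cons,
      Matrix.head_fin_const, Matrix.empty_val', Matrix.cons_val_fin_one, smul_eq_mul]
    push_cast
    simp only [Complex.star_def, Complex.conj_ofReal]
    norm_num
    linear_combination ((-1+(n:ℂ))⁻¹) * htC + ((-1+(n:ℂ))⁻¹) * hsC
  have hx : corrX (rn2pe α n) =
      (1/((n:ℝ)-1)) * (2 * Real.sqrt α * Real.sqrt (1-α)) := by
    rw [corrX, pauliExp, show Matrix.trace (rn2pe α n * (σx ⊗ₖ σx)) =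
        (((1/((n:ℝ)-1)) * (2 * Real.sqrt α * Real.sqrt (1-α)) : ℝ) : ℂ) from ?_,
      Complex.ofReal_re]
    simp only [rn2pe, rhoAlpha, rho1, ketPsi, σx, Matrix.trace, Matrix.mul_apply,
      Fintype.sum_prod_type, Fin.sum_univ_two, Matrix.one_apply, kroneckerMap_apply,
      Matrix.add_apply, Matrix.smul_apply, Matrix.of_apply, Matrix.diag_apply,
      Matrix.cons_val', Matrix.cons_val_zero, Matrix.cons_val_one, Matrix.head_cons,
      Matrix.head_fin_const, Matrix.empty_val', Matrix.cons_val_fin_one, smul_eq_mul]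
    push_cast
    simp only [Complex.star_def, Complex.conj_ofReal]
    norm_num
    ring
  have hC : 0 < (1/((n:ℝ)-1)) * (2 * Real.sqrt α * Real.sqrt (1-α)) := by
    apply mul_pos (by positivity)
    exact mul_pos (mul_pos two_pos (Real.sqrt_pos.2 hα0)) (Real.sqrt_pos.2 h1α)
  have hnη : 0 ≤ (n:ℝ) - η := by nlinarith [mul_nonneg h1α.le hn2]
  have hη0 : 0 ≤ η := by nlinarith [mul_nonneg hα0.le hn2]
  have h2 : 0 ≤ (1-α)*((n:ℝ)-η) := mul_nonneg h1α.le hnη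
  have h3 : 0 ≤ α * η := mul_nonneg hα0.le hη0
  have q1 : (Real.sqrt ((n:ℝ)-2))^2 = (n:ℝ)-2 := Real.sq_sqrt hn2
  have q2 : (Real.sqrt ((1-α)*((n:ℝ)-η)))^2 = (1-α)*((n:ℝ)-η) := Real.sq_sqrt h2
  have q3 : (Real.sqrt α)^2 = α := Real.sq_sqrt hα0.le
  have q4 : (Real.sqrt (1-α))^2 = 1-α := Real.sq_sqrt h1α.le
  have q5 : (Real.sqrt (α*η))^2 = α*η := Real.sq_sqrt h3
  have e1 : Real.sqrt ((1 + blochA (rn2pe α n))^2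
        - (blochB (rn2pe α n) + corrZ (rn2pe α n))^2)
      = 2 * Real.sqrt ((n:ℝ)-2) * Real.sqrt ((1-α)*((n:ℝ)-η))
          * ((1/((n:ℝ)-1)) * (2 * Real.sqrt α * Real.sqrt (1-α))) := by
    rw [ha, hb, hz, show (1 + ((1/((n:ℝ)-1))*(1-2*α) + (((n:ℝ)-2)/((n:ℝ)-1))*(1-2*α)))^2
        - (((1/((n:ℝ)-1))*(1-2*α) + (((n:ℝ)-2)/((n:ℝ)-1))*(1-2*α))
          + ((1/((n:ℝ)-1)) + (((n:ℝ)-2)/((n:ℝ)-1))*(1-2*α)^2))^2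
        = (2 * Real.sqrt ((n:ℝ)-2) * Real.sqrt ((1-α)*((n:ℝ)-η))
          * ((1/((n:ℝ)-1)) * (2 * Real.sqrt α * Real.sqrt (1-α))))^2 from ?_,
      Real.sqrt_sq (by positivity)]
    rw [show (2 * Real.sqrt ((n:ℝ)-2) * Real.sqrt ((1-α)*((n:ℝ)-η))
          * ((1/((n:ℝ)-1)) * (2 * Real.sqrt α * Real.sqrt (1-α))))^2
        = 16 * (Real.sqrt ((n:ℝ)-2))^2 * (Real.sqrt ((1-α)*((n:ℝ)-η)))^2
          * (Real.sqrt α)^2 * (Real.sqrt (1-α))^2 * (1/((n:ℝ)-1))^2 from by ring,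
      q1, q2, q3, q4, hη]
    field_simp
    ring
  have e2 : Real.sqrt ((1 - blochA (rn2pe α n))^2
        - (blochB (rn2pe α n) - corrZ (rn2pe α n))^2)
      = 2 * Real.sqrt ((n:ℝ)-2) * Real.sqrt (α*η)
          * ((1/((n:ℝ)-1)) * (2 * Real.sqrt α * Real.sqrt (1-α))) := by
    rw [ha, hb, hz, show (1 - ((1/((n:ℝ)-1))*(1-2*α) + (((n:ℝ)-2)/((n:ℝ)-1))*(1-2*α)))^2
        - (((1/((n:ℝ)-1))*(1-2*α) + (((n:ℝ)-2)/((n:ℝ)-1))*(1-2*α))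
          - ((1/((n:ℝ)-1)) + (((n:ℝ)-2)/((n:ℝ)-1))*(1-2*α)^2))^2
        = (2 * Real.sqrt ((n:ℝ)-2) * Real.sqrt (α*η)
          * ((1/((n:ℝ)-1)) * (2 * Real.sqrt α * Real.sqrt (1-α))))^2 from ?_,
      Real.sqrt_sq (by positivity)]
    rw [show (2 * Real.sqrt ((n:ℝ)-2) * Real.sqrt (α*η)
          * ((1/((n:ℝ)-1)) * (2 * Real.sqrt α * Real.sqrt (1-α))))^2
        = 16 * (Real.sqrt ((n:ℝ)-2))^2 * (Real.sqrt (α*η))^2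
          * (Real.sqrt α)^2 * (Real.sqrt (1-α))^2 * (1/((n:ℝ)-1))^2 from by ring,
      q1, q5, q3, q4, hη]
    field_simp
    ring
  rw [Fq, e1, e2, hx, abs_of_pos hC, div_eq_iff hC.ne']
  ring

end
end

section
/- For the bipartite reduced RPE state, F/t⊥ = √(2(n-2))·(√(2α) + √(6α + n(n-1-4α)))/√(1-α). -/
open Matrix
open scoped Matrix Kronecker ComplexOrder

noncomputable section

lemma blochA_rpe (n : ℕ) (hn : 3 ≤ n) (α : ℝ) (h0 : 0 ≤ α) (h1 : α ≤ 1) :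
    blochA (rpe α n) =
      (2*(1-α) + 4*((n:ℝ)-2)*(1-α) + ((n:ℝ)^2-5*(n:ℝ)+6) - 2*α) / ((n:ℝ)*((n:ℝ)-1)) := by
  have hs1 : Real.sqrt (1-α) * Real.sqrt (1-α) = 1 - α := Real.mul_self_sqrt (by linarith)
  have hs2 : Real.sqrt α * Real.sqrt α = α := Real.mul_self_sqrt h0
  have hN : (3:ℝ) ≤ (n:ℝ) := by exact_mod_cast hn
  have hD : (n:ℝ)*((n:ℝ)-1) ≠ 0 := by nlinarith
  simp only [blochA, pauliExp, rpe]
  set c1 : ℝ := 2 / ((n:ℝ)*((n:ℝ)-1)) with hc1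
  set c2 : ℝ := 2 * ((n:ℝ)-2) / ((n:ℝ)*((n:ℝ)-1)) with hc2
  set c3 : ℝ := (((n:ℝ)^2 - 5*(n:ℝ) + 6) / ((n:ℝ)*((n:ℝ)-1))) with hc3
  clear_value c1 c2 c3
  simp [Matrix.trace, Matrix.mul_apply, Fintype.sum_prod_type,
    Fin.sum_univ_two, Matrix.kroneckerMap_apply, rhoAlpha, ketPsi, rho1, rho0, σz,
    Matrix.one_apply, Complex.add_re, Complex.mul_re, hs1, hs2]
  rw [hc1, hc2, hc3]
  field_simp
  ring

lemma blochB_rpe (n : ℕ) (hn : 3 ≤ n) (α : ℝ) (h0 : 0 ≤ α) (h1 : α ≤ 1) :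
    blochB (rpe α n) =
      (2*(1-α) + 4*((n:ℝ)-2)*(1-α) + ((n:ℝ)^2-5*(n:ℝ)+6) - 2*α) / ((n:ℝ)*((n:ℝ)-1)) := by
  have hs1 : Real.sqrt (1-α) * Real.sqrt (1-α) = 1 - α := Real.mul_self_sqrt (by linarith)
  have hs2 : Real.sqrt α * Real.sqrt α = α := Real.mul_self_sqrt h0
  have hN : (3:ℝ) ≤ (n:ℝ) := by exact_mod_cast hn
  have hD : (n:ℝ)*((n:ℝ)-1) ≠ 0 := by nlinarith
  simp only [blochB, pauliExp, rpe]
  set c1 : ℝ := 2 / ((n:ℝ)*((n:ℝ)-1)) with hc1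
  set c2 : ℝ := 2 * ((n:ℝ)-2) / ((n:ℝ)*((n:ℝ)-1)) with hc2
  set c3 : ℝ := (((n:ℝ)^2 - 5*(n:ℝ) + 6) / ((n:ℝ)*((n:ℝ)-1))) with hc3
  clear_value c1 c2 c3
  simp [Matrix.trace, Matrix.mul_apply, Fintype.sum_prod_type,
    Fin.sum_univ_two, Matrix.kroneckerMap_apply, rhoAlpha, ketPsi, rho1, rho0, σz,
    Matrix.one_apply, Complex.add_re, Complex.mul_re, hs1, hs2]
  rw [hc1, hc2, hc3]
  field_simp
  ring

lemma corrZ_rpe (n : ℕ) (hn : 3 ≤ n) (α : ℝ) (h0 : 0 ≤ α) (h1 : α ≤ 1) :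
    corrZ (rpe α n) =
      (2*(1-α) + 4*((n:ℝ)-2)*(1-α) + ((n:ℝ)^2-5*(n:ℝ)+6) - 4*((n:ℝ)-2)*α + 2*α) / ((n:ℝ)*((n:ℝ)-1)) := by
  have hs1 : Real.sqrt (1-α) * Real.sqrt (1-α) = 1 - α := Real.mul_self_sqrt (by linarith)
  have hs2 : Real.sqrt α * Real.sqrt α = α := Real.mul_self_sqrt h0
  have hN : (3:ℝ) ≤ (n:ℝ) := by exact_mod_cast hn
  have hD : (n:ℝ)*((n:ℝ)-1) ≠ 0 := by nlinarith
  simp only [corrZ, pauliExp, rpe]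
  set c1 : ℝ := 2 / ((n:ℝ)*((n:ℝ)-1)) with hc1
  set c2 : ℝ := 2 * ((n:ℝ)-2) / ((n:ℝ)*((n:ℝ)-1)) with hc2
  set c3 : ℝ := (((n:ℝ)^2 - 5*(n:ℝ) + 6) / ((n:ℝ)*((n:ℝ)-1))) with hc3
  clear_value c1 c2 c3
  simp [Matrix.trace, Matrix.mul_apply, Fintype.sum_prod_type,
    Fin.sum_univ_two, Matrix.kroneckerMap_apply, rhoAlpha, ketPsi, rho1, rho0, σz,
    Complex.add_re, Complex.mul_re, hs1, hs2]
  rw [hc1, hc2, hc3]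
  field_simp
  ring

lemma corrX_rpe (n : ℕ) (hn : 3 ≤ n) (α : ℝ) (h0 : 0 ≤ α) (h1 : α ≤ 1) :
    corrX (rpe α n) =
      4 * (Real.sqrt α * Real.sqrt (1-α)) / ((n:ℝ)*((n:ℝ)-1)) := by
  have hN : (3:ℝ) ≤ (n:ℝ) := by exact_mod_cast hn
  have hD : (n:ℝ)*((n:ℝ)-1) ≠ 0 := by nlinarith
  simp only [corrX, pauliExp, rpe]
  set c1 : ℝ := 2 / ((n:ℝ)*((n:ℝ)-1)) with hc1
  set c2 : ℝ := 2 * ((n:ℝ)-2) / ((n:ℝ)*((n:ℝ)-1)) with hc2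
  set c3 : ℝ := (((n:ℝ)^2 - 5*(n:ℝ) + 6) / ((n:ℝ)*((n:ℝ)-1))) with hc3
  clear_value c1 c2 c3
  simp [Matrix.trace, Matrix.mul_apply, Fintype.sum_prod_type,
    Fin.sum_univ_two, Matrix.kroneckerMap_apply, rhoAlpha, ketPsi, rho1, rho0, σx,
    Complex.add_re, Complex.mul_re]
  rw [hc1]
  field_simp
  ring

/-- For the bipartite reduced RPE state,
`F/t⊥ = √(2(n-2))·(√(2α) + √(6α + n(n-1-4α)))/√(1-α)`. -/
theorem stmt14 (n : ℕ) (hn : 3 ≤ n) (α : ℝ) (hα : α ∈ Set.Ioo 0 (1/2 : ℝ)) :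
    Fq (rpe α n) / |corrX (rpe α n)| =
      Real.sqrt (2 * ((n : ℝ) - 2)) *
        (Real.sqrt (2 * α) + Real.sqrt (6 * α + (n : ℝ) * ((n : ℝ) - 1 - 4 * α))) /
          Real.sqrt (1 - α) := by
  obtain ⟨hα0, hα2⟩ := hα
  have h0 : (0:ℝ) ≤ α := le_of_lt hα0
  have h1 : α ≤ 1 := by linarith
  have hN : (3:ℝ) ≤ (n:ℝ) := by exact_mod_cast hn
  have hDpos : (0:ℝ) < (n:ℝ)*((n:ℝ)-1) := by nlinarith
  have hn2 : (0:ℝ) ≤ (n:ℝ)-2 := by linarith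
  have hn1 : (n:ℝ) - 1 ≠ 0 := by linarith
  have hn0 : (n:ℝ) ≠ 0 := by linarith
  have ha := blochA_rpe n hn α h0 h1
  have hb := blochB_rpe n hn α h0 h1
  have htz := corrZ_rpe n hn α h0 h1
  have htx := corrX_rpe n hn α h0 h1
  have hQ0 : (0:ℝ) ≤ 6 * α + (n:ℝ) * ((n:ℝ) - 1 - 4*α) := by nlinarith
  have hsa : Real.sqrt α ^ 2 = α := Real.sq_sqrt h0
  have hs1a : Real.sqrt (1-α) ^ 2 = 1 - α := Real.sq_sqrt (by linarith)
  have hS1 : (1 + blochA (rpe α n))^2 - (blochB (rpe α n) + corrZ (rpe α n))^2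
      = (4/((n:ℝ)*((n:ℝ)-1)) * Real.sqrt (2*((n:ℝ)-2)) * Real.sqrt α
          * Real.sqrt (6 * α + (n:ℝ) * ((n:ℝ) - 1 - 4*α)))^2 := by
    rw [ha, hb, htz]
    rw [show (4/((n:ℝ)*((n:ℝ)-1)) * Real.sqrt (2*((n:ℝ)-2)) * Real.sqrt α
          * Real.sqrt (6 * α + (n:ℝ) * ((n:ℝ) - 1 - 4*α)))^2
        = (4/((n:ℝ)*((n:ℝ)-1)))^2 * Real.sqrt (2*((n:ℝ)-2))^2 * Real.sqrt α^2
          * Real.sqrt (6 * α + (n:ℝ) * ((n:ℝ) - 1 - 4*α))^2 by ring]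
    rw [hsa, Real.sq_sqrt (by linarith : (0:ℝ) ≤ 2*((n:ℝ)-2)), Real.sq_sqrt hQ0]
    field_simp
    ring
  have hS2 : (1 - blochA (rpe α n))^2 - (blochB (rpe α n) - corrZ (rpe α n))^2
      = (8/((n:ℝ)*((n:ℝ)-1)) * Real.sqrt ((n:ℝ)-2) * α)^2 := by
    rw [ha, hb, htz]
    rw [show (8/((n:ℝ)*((n:ℝ)-1)) * Real.sqrt ((n:ℝ)-2) * α)^2
        = (8/((n:ℝ)*((n:ℝ)-1)))^2 * Real.sqrt ((n:ℝ)-2)^2 * α^2 by ring]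
    rw [Real.sq_sqrt hn2]
    field_simp
    ring
  have hF : Fq (rpe α n)
      = 4/((n:ℝ)*((n:ℝ)-1)) * Real.sqrt (2*((n:ℝ)-2)) * Real.sqrt α
          * Real.sqrt (6 * α + (n:ℝ) * ((n:ℝ) - 1 - 4*α))
        + 8/((n:ℝ)*((n:ℝ)-1)) * Real.sqrt ((n:ℝ)-2) * α := by
    rw [Fq, hS1, hS2, Real.sqrt_sq (by positivity), Real.sqrt_sq (by positivity)]
  have htabs : |corrX (rpe α n)| = 4 * (Real.sqrt α * Real.sqrt (1-α)) / ((n:ℝ)*((n:ℝ)-1)) := by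
    rw [htx, abs_of_nonneg (by positivity)]
  rw [hF, htabs]
  rw [Real.sqrt_mul (by norm_num : (0:ℝ) ≤ 2) ((n:ℝ)-2), Real.sqrt_mul (by norm_num : (0:ℝ) ≤ 2) α]
  have hsapos : (0:ℝ) < Real.sqrt α := Real.sqrt_pos.mpr hα0
  have hs1apos : (0:ℝ) < Real.sqrt (1-α) := Real.sqrt_pos.mpr (by linarith)
  have h2 : Real.sqrt 2 * Real.sqrt 2 = 2 := Real.mul_self_sqrt (by norm_num)
  have hsa' : Real.sqrt α * Real.sqrt α = α := Real.mul_self_sqrt h0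
  field_simp
  ring_nf
  rw [Real.sq_sqrt (by norm_num : (0:ℝ) ≤ 2), hsa]
  ring

end
end
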